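/- Parabola identity at fixed points: if β^λ_{ijkl}(λ, y) = 0 for all i, j, k, l and β^y_i(y) = 0 for all i, then S + (1/2) b₂ − 6 Y = (1/8) Ns ε² − (1/(2 Ns)) (a₀ + b₀ − (1/2) Ns ε)²; in particular, setting R = (a₀ + b₀ − (1/2) Ns ε)/√(2 Ns) and T = S + (1/2) b₂ − 6 Y, every fixed point lies on the parabola R² + T = (1/8) Ns ε². -/

import Mathlib

open Matrix

noncomputable section

/-- Entrywise complex conjugate of a matrix. -/
def mconj {Nf : ℕ} (A : Matrix (Fin Nf) (Fin Nf) ℂ) : Matrix (Fin Nf) (Fin Nf) ℂ :=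
  A.map (starRingEnd ℂ)

/-- `Z_{ij} = Tr(y_i ȳ_j + ȳ_i y_j)` (a real number). -/
def Zw {Ns Nf : ℕ} (y : Fin Ns → Matrix (Fin Nf) (Fin Nf) ℂ) (i j : Fin Ns) : ℝ :=
  (Matrix.trace (y i * mconj (y j) + mconj (y i) * y j)).re

/-- `X_{ijkl} = (1/4) Σ_σ Tr(y_{σ(i)} ȳ_{σ(j)} y_{σ(k)} ȳ_{σ(l)})`,
summing over all 24 permutations of the index list `(i,j,k,l)`. -/
def Xw {Ns Nf : ℕ} (y : Fin Ns → Matrix (Fin Nf) (Fin Nf) ℂ) (i j k l : Fin Ns) : ℝ :=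
  (1 / 4) * (∑ σ : Equiv.Perm (Fin 4),
    Matrix.trace (y (![i, j, k, l] (σ 0)) * mconj (y (![i, j, k, l] (σ 1))) *
      (y (![i, j, k, l] (σ 2)) * mconj (y (![i, j, k, l] (σ 3)))))).re

/-- Full permutation symmetry of the quartic coupling tensor. -/
def FullySymm {Ns : ℕ} (lam : Fin Ns → Fin Ns → Fin Ns → Fin Ns → ℝ) : Prop :=
  ∀ i j k l, lam i j k l = lam j i k l ∧ lam i j k l = lam i k j l ∧
    lam i j k l = lam i j l k

/-- One-loop quartic beta function for Weyl fermions (α = 2). -/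
def betaLamW {Ns Nf : ℕ} (ε : ℝ) (lam : Fin Ns → Fin Ns → Fin Ns → Fin Ns → ℝ)
    (y : Fin Ns → Matrix (Fin Nf) (Fin Nf) ℂ) (i j k l : Fin Ns) : ℝ :=
  -ε * lam i j k l
    + ∑ m, ∑ n, (lam i j m n * lam m n k l + lam i k m n * lam m n j l
        + lam i l m n * lam m n j k)
    - 4 * Xw y i j k l
    + (1 / 2) * ∑ m, (Zw y i m * lam m j k l + Zw y j m * lam i m k l
        + Zw y k m * lam i j m l + Zw y l m * lam i j k m)

/-- One-loop Yukawa beta function for Weyl fermions (α = 2). -/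
def betaYW {Ns Nf : ℕ} (ε : ℝ) (y : Fin Ns → Matrix (Fin Nf) (Fin Nf) ℂ) (i : Fin Ns) :
    Matrix (Fin Nf) (Fin Nf) ℂ :=
  (-(1 / 2) * (ε : ℂ)) • y i
    + (1 / 2 : ℂ) • ∑ j, (y j * mconj (y j) * y i + y i * mconj (y j) * y j
        + (4 : ℂ) • (y j * mconj (y i) * y j))
    + (1 / 2 : ℂ) • ∑ j, ((Zw y i j : ℂ) • y j)

/-- `a₀ = λ_{iijj}`. -/
def a0inv {Ns : ℕ} (lam : Fin Ns → Fin Ns → Fin Ns → Fin Ns → ℝ) : ℝ :=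
  ∑ i, ∑ j, lam i i j j

/-- `a₁ = λ_{iimn} λ_{jjmn}`. -/
def a1inv {Ns : ℕ} (lam : Fin Ns → Fin Ns → Fin Ns → Fin Ns → ℝ) : ℝ :=
  ∑ m, ∑ n, (∑ i, lam i i m n) * (∑ j, lam j j m n)

/-- `S = λ_{ijkl} λ_{ijkl} = ‖λ‖²`. -/
def Sinv {Ns : ℕ} (lam : Fin Ns → Fin Ns → Fin Ns → Fin Ns → ℝ) : ℝ :=
  ∑ i, ∑ j, ∑ k, ∑ l, lam i j k l ^ 2

/-- `b₀ = Z_{ii}`. -/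
def b0inv {Ns Nf : ℕ} (y : Fin Ns → Matrix (Fin Nf) (Fin Nf) ℂ) : ℝ :=
  ∑ i, Zw y i i

/-- `b₁ = Z_{ij} Z_{ij} − b₀²/Ns`. -/
def b1inv {Ns Nf : ℕ} (y : Fin Ns → Matrix (Fin Nf) (Fin Nf) ℂ) : ℝ :=
  (∑ i, ∑ j, Zw y i j ^ 2) - b0inv y ^ 2 / (Ns : ℝ)

/-- `b₂ = Σ_{i,j} (λ_{ijkk} − (a₀/Ns) δ_{ij} + Z_{ij} − (b₀/Ns) δ_{ij})²`. -/
def b2inv {Ns Nf : ℕ} (lam : Fin Ns → Fin Ns → Fin Ns → Fin Ns → ℝ)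
    (y : Fin Ns → Matrix (Fin Nf) (Fin Nf) ℂ) : ℝ :=
  ∑ i, ∑ j, ((∑ k, lam i j k k) - (a0inv lam / (Ns : ℝ)) * (if i = j then 1 else 0)
      + Zw y i j - (b0inv y / (Ns : ℝ)) * (if i = j then 1 else 0)) ^ 2

/-- `b₃ = X_{iijj}`. -/
def b3inv {Ns Nf : ℕ} (y : Fin Ns → Matrix (Fin Nf) (Fin Nf) ℂ) : ℝ :=
  ∑ i, ∑ j, Xw y i i j j

/-- `Y = Tr(y_i ȳ_i y_j ȳ_j) = ‖y_i ȳ_i‖²`. -/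
def Yinv {Ns Nf : ℕ} (y : Fin Ns → Matrix (Fin Nf) (Fin Nf) ℂ) : ℝ :=
  (∑ i, ∑ j, Matrix.trace (y i * mconj (y i) * (y j * mconj (y j)))).re

/-- `b̃₀ = a₀ b₀ / Ns`. -/
def btilde0 {Ns Nf : ℕ} (lam : Fin Ns → Fin Ns → Fin Ns → Fin Ns → ℝ)
    (y : Fin Ns → Matrix (Fin Nf) (Fin Nf) ℂ) : ℝ :=
  a0inv lam * b0inv y / (Ns : ℝ)

/-- The `A`-function `A_y(λ)` generating the one-loop quartic beta function. -/
def Afun {Ns Nf : ℕ} (ε : ℝ) (lam : Fin Ns → Fin Ns → Fin Ns → Fin Ns → ℝ)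
    (y : Fin Ns → Matrix (Fin Nf) (Fin Nf) ℂ) : ℝ :=
  -(1 / 2) * ε * (∑ i, ∑ j, ∑ k, ∑ l, lam i j k l * lam i j k l)
    + (∑ i, ∑ j, ∑ k, ∑ l, ∑ m, ∑ n, lam i j k l * lam k l m n * lam m n i j)
    - 4 * (∑ i, ∑ j, ∑ k, ∑ l, Xw y i j k l * lam i j k l)
    + (∑ i, ∑ j, ∑ k, ∑ l, ∑ m, Zw y i j * lam i k l m * lam j k l m)


/-! ### Auxiliary lemmas -/

section Aux

lemma mconj_mul {Nf : ℕ} (A B : Matrix (Fin Nf) (Fin Nf) ℂ) :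
    mconj (A * B) = mconj A * mconj B := by simp [mconj, Matrix.map_mul]

lemma mconj_mconj {Nf : ℕ} (A : Matrix (Fin Nf) (Fin Nf) ℂ) : mconj (mconj A) = A := by
  ext i j; simp [mconj]

lemma transpose_mconj {Nf : ℕ} (A : Matrix (Fin Nf) (Fin Nf) ℂ) : (mconj A)ᵀ = mconj Aᵀ := by
  ext i j; simp [mconj]

lemma trace_mconj {Nf : ℕ} (A : Matrix (Fin Nf) (Fin Nf) ℂ) :
    Matrix.trace (mconj A) = (starRingEnd ℂ) (Matrix.trace A) := by
  simp [mconj, Matrix.trace, Matrix.diag, map_sum]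

/-- four-factor trace -/
def T4 {Ns Nf : ℕ} (y : Fin Ns → Matrix (Fin Nf) (Fin Nf) ℂ) (a b c d : Fin Ns) : ℂ :=
  Matrix.trace (y a * mconj (y b) * (y c * mconj (y d)))

variable {Ns Nf : ℕ} (y : Fin Ns → Matrix (Fin Nf) (Fin Nf) ℂ)

lemma T4_cyc (a b c d : Fin Ns) : T4 y a b c d = T4 y c d a b := by
  rw [T4, T4, Matrix.trace_mul_comm]

lemma trace_conj_pair (i j : Fin Ns) :
    Matrix.trace (mconj (y i) * y j) = (starRingEnd ℂ) (Matrix.trace (y i * mconj (y j))) := by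
  rw [← trace_mconj, mconj_mul, mconj_mconj]

lemma Zw_eq (i j : Fin Ns) : Zw y i j = 2 * (Matrix.trace (y i * mconj (y j))).re := by
  rw [Zw, Matrix.trace_add, trace_conj_pair]
  simp [Complex.add_re]; ring

lemma Zw_symm (i j : Fin Ns) : Zw y i j = Zw y j i := by
  rw [Zw_eq, Zw_eq, Matrix.trace_mul_comm, trace_conj_pair]
  simp

lemma Zw_eq' (i j : Fin Ns) : (Matrix.trace (y j * mconj (y i))).re = Zw y i j / 2 := by
  rw [Zw_symm, Zw_eq]; ring

lemma T4_swap (hy : ∀ i, (y i)ᵀ = y i) (a b : Fin Ns) : T4 y a b b a = T4 y a a b b := by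
  calc T4 y a b b a = Matrix.trace ((y a * mconj (y b) * (y b * mconj (y a)))ᵀ) :=
        (Matrix.trace_transpose _).symm
    _ = Matrix.trace ((mconj (y a) * y b) * (mconj (y b) * y a)) := by
        rw [Matrix.transpose_mul, Matrix.transpose_mul, Matrix.transpose_mul,
          transpose_mconj, transpose_mconj, hy, hy]
    _ = Matrix.trace ((mconj (y a) * y b * mconj (y b)) * y a) := by congr 1; noncomm_ring
    _ = Matrix.trace (y a * (mconj (y a) * y b * mconj (y b))) := Matrix.trace_mul_comm _ _
    _ = T4 y a a b b := by rw [T4]; congr 1; noncomm_ring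

lemma T4_revconj (hy : ∀ i, (y i)ᵀ = y i) (a b c d : Fin Ns) :
    T4 y a b c d = (starRingEnd ℂ) (T4 y d c b a) := by
  calc T4 y a b c d = Matrix.trace ((y a * mconj (y b) * (y c * mconj (y d)))ᵀ) :=
        (Matrix.trace_transpose _).symm
    _ = Matrix.trace ((mconj (y d) * y c) * (mconj (y b) * y a)) := by
        rw [Matrix.transpose_mul, Matrix.transpose_mul, Matrix.transpose_mul,
          transpose_mconj, transpose_mconj, hy, hy, hy, hy]
    _ = Matrix.trace (mconj (y d * mconj (y c) * (y b * mconj (y a)))) := by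
        rw [mconj_mul, mconj_mul, mconj_mul, mconj_mconj, mconj_mconj]
    _ = (starRingEnd ℂ) (T4 y d c b a) := trace_mconj _

lemma sc3 {ι M : Type*} [Fintype ι] [AddCommMonoid M] (f : ι → ι → ι → M) :
    ∑ i, ∑ j, ∑ k, f i j k = ∑ k, ∑ i, ∑ j, f i j k := by
  have h : ∀ i, ∑ j, ∑ k, f i j k = ∑ k, ∑ j, f i j k := fun i => Finset.sum_comm
  simp_rw [h]
  exact Finset.sum_comm

lemma sc3' {ι M : Type*} [Fintype ι] [AddCommMonoid M] (f : ι → ι → ι → M) :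
    ∑ i, ∑ j, ∑ k, f i j k = ∑ j, ∑ k, ∑ i, f i j k := by
  rw [sc3]; exact sc3 fun k i j => f i j k

lemma sc4 {ι M : Type*} [Fintype ι] [AddCommMonoid M] (f : ι → ι → ι → ι → M) :
    ∑ i, ∑ j, ∑ k, ∑ l, f i j k l = ∑ k, ∑ l, ∑ i, ∑ j, f i j k l := by
  have h : ∀ g : ι → ι → ι → ι → M,
      ∑ p : ι × ι, ∑ q : ι × ι, g p.1 p.2 q.1 q.2 = ∑ i, ∑ j, ∑ k, ∑ l, g i j k l := by
    intro g; simp_rw [Fintype.sum_prod_type]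
  rw [← h, Finset.sum_comm, h (fun k l i j => f i j k l)]

lemma sum_perm_succ {M : Type*} [AddCommMonoid M] {n : ℕ} (f : Equiv.Perm (Fin (n+1)) → M) :
    ∑ σ : Equiv.Perm (Fin (n+1)), f σ
      = ∑ p : Fin (n+1), ∑ τ : Equiv.Perm (Fin n), f (Equiv.Perm.decomposeFin.symm (p, τ)) := by
  rw [← Equiv.sum_comp Equiv.Perm.decomposeFin.symm, Fintype.sum_prod_type]

lemma sum_perm_fin4 (F : Fin 4 → Fin 4 → Fin 4 → Fin 4 → ℂ) :
    ∑ σ : Equiv.Perm (Fin 4), F (σ 0) (σ 1) (σ 2) (σ 3) =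
      F 0 1 2 3 + F 0 1 3 2 + F 0 2 1 3 + F 0 2 3 1 + F 0 3 2 1 + F 0 3 1 2
    + (F 1 0 2 3 + F 1 0 3 2 + F 1 2 0 3 + F 1 2 3 0 + F 1 3 2 0 + F 1 3 0 2)
    + (F 2 1 0 3 + F 2 1 3 0 + F 2 0 1 3 + F 2 0 3 1 + F 2 3 0 1 + F 2 3 1 0)
    + (F 3 1 2 0 + F 3 1 0 2 + F 3 2 1 0 + F 3 2 0 1 + F 3 0 2 1 + F 3 0 1 2) := by
  simp only [sum_perm_succ (n := 3), sum_perm_succ (n := 2), sum_perm_succ (n := 1),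
    sum_perm_succ (n := 0)]
  simp only [show (1:Fin 4) = (0:Fin 3).succ from rfl, show (2:Fin 4) = (1:Fin 3).succ from rfl,
    show (3:Fin 4) = (2:Fin 3).succ from rfl, show (1:Fin 3) = (0:Fin 2).succ from rfl,
    show (2:Fin 3) = (1:Fin 2).succ from rfl, show (1:Fin 2) = (0:Fin 1).succ from rfl,
    Equiv.Perm.decomposeFin_symm_apply_zero, Equiv.Perm.decomposeFin_symm_apply_succ]
  simp (config := { decide := true }) [Fin.sum_univ_succ, Equiv.swap_apply_def]
  ring

lemma Xw_iijj (hy : ∀ i, (y i)ᵀ = y i) (i j : Fin Ns) :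
    Xw y i i j j = 4 * (T4 y i i j j).re + 2 * (T4 y i j i j).re := by
  have hv0 : (![i,i,j,j] : Fin 4 → Fin Ns) 0 = i := rfl
  have hv1 : (![i,i,j,j] : Fin 4 → Fin Ns) 1 = i := rfl
  have hv2 : (![i,i,j,j] : Fin 4 → Fin Ns) 2 = j := rfl
  have hv3 : (![i,i,j,j] : Fin 4 → Fin Ns) 3 = j := rfl
  have key : Xw y i i j j = 1/4 * (∑ σ : Equiv.Perm (Fin 4),
      T4 y (![i,i,j,j] (σ 0)) (![i,i,j,j] (σ 1)) (![i,i,j,j] (σ 2)) (![i,i,j,j] (σ 3))).re := rfl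
  rw [key, sum_perm_fin4
    (fun a b c d => T4 y (![i,i,j,j] a) (![i,i,j,j] b) (![i,i,j,j] c) (![i,i,j,j] d))]
  simp only [hv0, hv1, hv2, hv3]
  have e1 : T4 y i j j i = T4 y i i j j := T4_swap y hy i j
  have e2 : T4 y j i i j = T4 y i i j j := (T4_swap y hy j i).trans (T4_cyc y j j i i)
  have e3 : T4 y j j i i = T4 y i i j j := T4_cyc y j j i i
  have e4 : (T4 y j i j i).re = (T4 y i j i j).re := by
    rw [T4_revconj y hy j i j i]; simp
  rw [e1, e2, e3]
  simp only [Complex.add_re]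
  rw [e4]
  ring

end Aux

/-- Parabola identity at fixed points:
`S + (1/2) b₂ − 6 Y = (1/8) Ns ε² − (1/(2 Ns)) (a₀ + b₀ − (1/2) Ns ε)²`; with
`R = (a₀ + b₀ − (1/2) Ns ε)/√(2 Ns)` and `T = S + (1/2) b₂ − 6 Y`, every fixed point
lies on the parabola `R² + T = (1/8) Ns ε²`. -/
theorem parabola_identity {Ns Nf : ℕ} (hNs : 1 ≤ Ns) (hNf : 1 ≤ Nf)
    (ε : ℝ) (lam : Fin Ns → Fin Ns → Fin Ns → Fin Ns → ℝ)
    (y : Fin Ns → Matrix (Fin Nf) (Fin Nf) ℂ)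
    (hsym : FullySymm lam) (hy : ∀ i, (y i)ᵀ = y i)
    (hfpl : ∀ i j k l, betaLamW ε lam y i j k l = 0)
    (hfpy : ∀ i, betaYW ε y i = 0) :
    (Sinv lam + (1 / 2) * b2inv lam y - 6 * Yinv y
        = (1 / 8) * (Ns : ℝ) * ε ^ 2
          - (1 / (2 * (Ns : ℝ))) * (a0inv lam + b0inv y - (1 / 2) * (Ns : ℝ) * ε) ^ 2)
      ∧ ((a0inv lam + b0inv y - (1 / 2) * (Ns : ℝ) * ε) / Real.sqrt (2 * (Ns : ℝ))) ^ 2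
          + (Sinv lam + (1 / 2) * b2inv lam y - 6 * Yinv y)
        = (1 / 8) * (Ns : ℝ) * ε ^ 2 := by
  have hNs0 : (Ns:ℝ) ≠ 0 := Nat.cast_ne_zero.mpr (by omega)
  have lamswap : ∀ i j k l, lam i j k l = lam k l i j := fun i j k l => by
    rw [(hsym i j k l).2.1, (hsym i k j l).1, (hsym k i j l).2.2, (hsym k i l j).2.1]
  have swap_inner : ∀ (g : Fin Ns → Fin Ns → Fin Ns → ℝ),
      (∑ i, ∑ k, ∑ m, g i k m) = ∑ i, ∑ m, ∑ k, g i k m :=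
    fun g => Finset.sum_congr rfl fun i _ => Finset.sum_comm
  have ha1 : a1inv lam = ∑ i, ∑ j, ∑ m, ∑ n, lam i i m n * lam j j m n := by
    simp_rw [a1inv, Finset.sum_mul_sum]; exact sc4 _
  -- E2 : quartic fixed point contracted with δδ
  have hE2 : ε * a0inv lam
      = a1inv lam + 2 * Sinv lam + 2 * (∑ i, ∑ j, ∑ k, Zw y i j * lam i j k k)
        - 16 * (∑ i, ∑ j, (T4 y i i j j).re) - 8 * (∑ i, ∑ j, (T4 y i j i j).re) := by
    have hA : ∑ i, ∑ k, ∑ m, ∑ n, lam i i m n * lam m n k k = a1inv lam := by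
      have h1 : ∀ i k m n : Fin Ns, lam i i m n * lam m n k k = lam i i m n * lam k k m n :=
        fun i k m n => by rw [lamswap m n k k]
      simp_rw [h1]
      rw [show a1inv lam = ∑ m, ∑ n, ∑ i, ∑ k, lam i i m n * lam k k m n from by
        simp_rw [a1inv, Finset.sum_mul_sum]]
      exact sc4 _
    have hB : ∑ i, ∑ k, ∑ m, ∑ n, lam i k m n * lam m n i k = Sinv lam := by
      have h1 : ∀ i k m n : Fin Ns, lam i k m n * lam m n i k = lam i k m n ^ 2 :=
        fun i k m n => by rw [lamswap m n i k]; ring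
      simp_rw [h1]; rfl
    have hXC : ∑ i, ∑ j, Xw y i i j j
        = 4 * (∑ i, ∑ j, (T4 y i i j j).re) + 2 * (∑ i, ∑ j, (T4 y i j i j).re) := by
      simp_rw [Xw_iijj y hy, Finset.sum_add_distrib, Finset.mul_sum]
    have hz1 : ∑ i, ∑ k, ∑ m, Zw y i m * lam m i k k
        = ∑ i, ∑ j, ∑ k, Zw y i j * lam i j k k := by
      have h1 : ∀ i k m : Fin Ns, Zw y i m * lam m i k k = Zw y i m * lam i m k k :=
        fun i k m => by rw [(hsym m i k k).1]
      simp_rw [h1]; exact swap_inner _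
    have hz2 : ∑ i, ∑ k, ∑ m, Zw y i m * lam i m k k
        = ∑ i, ∑ j, ∑ k, Zw y i j * lam i j k k :=
      swap_inner _
    have hz3 : ∑ i, ∑ k, ∑ m, Zw y k m * lam i i m k
        = ∑ i, ∑ j, ∑ k, Zw y i j * lam i j k k := by
      have h1 : ∀ i k m : Fin Ns, Zw y k m * lam i i m k = Zw y m k * lam m k i i :=
        fun i k m => by rw [Zw_symm, lamswap i i m k]
      rw [Finset.sum_congr rfl fun i _ => Finset.sum_congr rfl fun k _ =>
        Finset.sum_congr rfl fun m _ => h1 i k m]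
      rw [sc3]
      exact swap_inner _
    have hz4 : ∑ i, ∑ k, ∑ m, Zw y k m * lam i i k m
        = ∑ i, ∑ j, ∑ k, Zw y i j * lam i j k k := by
      have h1 : ∀ i k m : Fin Ns, Zw y k m * lam i i k m = Zw y k m * lam k m i i :=
        fun i k m => by rw [lamswap i i k m]
      rw [Finset.sum_congr rfl fun i _ => Finset.sum_congr rfl fun k _ =>
        Finset.sum_congr rfl fun m _ => h1 i k m]
      exact sc3' _
    have h0 : ∑ i, ∑ k, betaLamW ε lam y i i k k = 0 := by simp [hfpl]
    simp only [betaLamW, Finset.sum_add_distrib, Finset.sum_sub_distrib, ← Finset.mul_sum,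
      Finset.sum_neg_distrib, neg_mul] at h0
    rw [hz1, hz2, hz3, hz4, hA, hB, hXC] at h0
    have hA0 : (∑ x : Fin Ns, ∑ x_1 : Fin Ns, lam x x x_1 x_1) = a0inv lam := rfl
    rw [hA0] at h0
    linarith [h0]
  -- E3 : Yukawa fixed point contracted with ȳ
  have hE3 : ε * b0inv y = 4 * (∑ i, ∑ j, (T4 y i i j j).re)
      + 8 * (∑ i, ∑ j, (T4 y i j i j).re) + ∑ i, ∑ j, Zw y i j ^ 2 := by
    have tri : ∀ i, (Matrix.trace (betaYW ε y i * mconj (y i))).re = 0 := fun i => by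
      rw [hfpy i]; simp
    have ctrace : ∀ i, Matrix.trace (betaYW ε y i * mconj (y i))
        = (-(1/2)*(ε:ℂ)) * Matrix.trace (y i * mconj (y i))
          + (1/2) * ∑ j, (T4 y j j i i + T4 y i j j i + 4 * T4 y j i j i)
          + (1/2) * ∑ j, ((Zw y i j : ℂ) * Matrix.trace (y j * mconj (y i))) := by
      intro i
      simp only [betaYW, add_mul, smul_mul_assoc, Finset.sum_mul, Matrix.trace_add,
        Matrix.trace_smul, Matrix.trace_sum, smul_eq_mul, T4, mul_assoc, Finset.mul_sum]
      try rw [← Finset.sum_add_distrib]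
      try congr 1
      try ring
    have h3' : ∀ i, (Matrix.trace (betaYW ε y i * mconj (y i))).re
        = -(1/2)*ε*(Zw y i i/2)
          + (1/2) * ∑ j, ((T4 y j j i i).re + (T4 y i j j i).re + 4*(T4 y j i j i).re)
          + (1/2) * ∑ j, (Zw y i j * (Zw y i j / 2)) := by
      intro i
      have c1 : (-(1/2)*(ε:ℂ)) = ((-(1/2)*ε : ℝ) : ℂ) := by push_cast; ring
      have c2 : ((1/2 : ℂ)) = ((1/2 : ℝ) : ℂ) := by norm_num
      have c4 : ∀ z : ℂ, (4:ℂ) * z = ((4:ℝ):ℂ) * z := fun z => by norm_num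
      rw [ctrace i, c1, c2]
      simp_rw [c4]
      simp only [Complex.re_ofReal_mul, Complex.add_re, Complex.re_sum, Zw_eq' y]
      try ring
    have h3 : ∑ i, (Matrix.trace (betaYW ε y i * mconj (y i))).re = 0 := by simp [tri]
    simp_rw [h3'] at h3
    have e1 : (∑ i, ∑ j, (T4 y j j i i).re) = ∑ i, ∑ j, (T4 y i i j j).re := Finset.sum_comm
    have e2 : (∑ i, ∑ j, (T4 y i j j i).re) = ∑ i, ∑ j, (T4 y i i j j).re := by
      refine Finset.sum_congr rfl fun i _ => Finset.sum_congr rfl fun j _ => ?_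
      rw [T4_swap y hy i j]
    have e3 : (∑ i, ∑ j, (T4 y j i j i).re) = ∑ i, ∑ j, (T4 y i j i j).re := Finset.sum_comm
    simp only [Finset.sum_add_distrib, ← Finset.mul_sum] at h3
    have hb0' : (∑ i, Zw y i i / 2) = b0inv y / 2 := by
      rw [← Finset.sum_div]; rfl
    have hzz : (∑ i, ∑ j, Zw y i j * (Zw y i j / 2)) = (∑ i, ∑ j, Zw y i j ^ 2)/2 := by
      simp_rw [show ∀ a:ℝ, a*(a/2) = a^2/2 from fun a => by ring, ← Finset.sum_div]
    rw [e1, e2, e3, hb0', hzz] at h3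
    linarith [h3]
  -- b₂ expansion
  have hb2 : b2inv lam y
      = a1inv lam + (∑ i, ∑ j, Zw y i j ^ 2)
        + 2 * (∑ i, ∑ j, ∑ k, Zw y i j * lam i j k k)
        - (a0inv lam + b0inv y)^2 / Ns := by
    have point : ∀ i j : Fin Ns,
        ((∑ k, lam i j k k) - (a0inv lam / (Ns:ℝ)) * (if i = j then 1 else 0)
          + Zw y i j - (b0inv y / (Ns:ℝ)) * (if i = j then 1 else 0)) ^ 2
        = (∑ k, lam i j k k)^2 + Zw y i j^2 + 2*(Zw y i j * (∑ k, lam i j k k))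
          - (if i = j then (2*((a0inv lam + b0inv y)/(Ns:ℝ)) * ((∑ k, lam i j k k) + Zw y i j)
              - ((a0inv lam + b0inv y)/(Ns:ℝ))^2) else 0) := by
      intro i j
      by_cases h : i = j
      · simp only [h, if_pos rfl, ↓reduceIte]; field_simp; ring
      · simp only [if_neg h]; ring
    have hLL : ∑ i, ∑ j, (∑ k, lam i j k k)^2 = a1inv lam := by
      simp_rw [sq, Finset.sum_mul_sum]
      have h1 : ∀ i j k l : Fin Ns,
          lam i j k k * lam i j l l = lam k k i j * lam l l i j :=
        fun i j k l => by rw [lamswap i j k k, lamswap i j l l]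
      rw [Finset.sum_congr rfl fun i _ => Finset.sum_congr rfl fun j _ =>
        Finset.sum_congr rfl fun k _ => Finset.sum_congr rfl fun l _ => h1 i j k l]
      rw [sc4]
      exact ha1.symm
    have hZL : ∑ i, ∑ j, 2*(Zw y i j * (∑ k, lam i j k k))
        = 2 * (∑ i, ∑ j, ∑ k, Zw y i j * lam i j k k) := by
      simp_rw [Finset.mul_sum]
    have hdiag : ∑ i, ∑ j, (if i = j then (2*((a0inv lam + b0inv y)/(Ns:ℝ))
          * ((∑ k, lam i j k k) + Zw y i j) - ((a0inv lam + b0inv y)/(Ns:ℝ))^2) else 0)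
        = 2*((a0inv lam + b0inv y)/(Ns:ℝ)) * (a0inv lam + b0inv y)
          - (Ns:ℝ) * ((a0inv lam + b0inv y)/(Ns:ℝ))^2 := by
      simp only [Finset.sum_ite_eq, Finset.mem_univ, if_pos]
      rw [Finset.sum_sub_distrib, ← Finset.mul_sum, Finset.sum_add_distrib]
      rw [show (∑ i, ∑ k, lam i i k k) = a0inv lam from rfl,
        show (∑ i, Zw y i i) = b0inv y from rfl]
      rw [Finset.sum_const, Finset.card_univ, Fintype.card_fin, nsmul_eq_mul]
    rw [b2inv]
    simp_rw [point]
    simp only [Finset.sum_add_distrib, Finset.sum_sub_distrib]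
    rw [hLL, hZL, hdiag]
    field_simp
    ring
  have hYinv : Yinv y = ∑ i, ∑ j, (T4 y i i j j).re := by
    rw [show Yinv y = (∑ i, ∑ j, T4 y i i j j).re from rfl, Complex.re_sum]
    exact Finset.sum_congr rfl fun i _ => Complex.re_sum _ _
  have hmain : Sinv lam + (1 / 2) * b2inv lam y - 6 * Yinv y
      = (1/2)*ε*(a0inv lam + b0inv y) - (a0inv lam + b0inv y)^2/(2*(Ns:ℝ)) := by
    rw [hYinv, hb2]
    linear_combination (-(1:ℝ)/2) * hE2 + (-(1:ℝ)/2) * hE3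
  have hrhs : (1/2)*ε*(a0inv lam + b0inv y) - (a0inv lam + b0inv y)^2/(2*(Ns:ℝ))
      = (1 / 8) * (Ns : ℝ) * ε ^ 2
        - (1 / (2 * (Ns : ℝ))) * (a0inv lam + b0inv y - (1 / 2) * (Ns : ℝ) * ε) ^ 2 := by
    field_simp
    ring
  have conj1 := hmain.trans hrhs
  refine ⟨conj1, ?_⟩
  rw [div_pow, Real.sq_sqrt (by positivity : (0:ℝ) ≤ 2*(Ns:ℝ)), conj1]
  field_simp
  ring
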